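/- Let A ∈ ℝ^{n×n} be symmetric with largest eigenvalue α₁ and smallest eigenvalue α_n, let g ∈ ℝ^n be nonzero, Δ > 0, and q(s) = gᵀs + (1/2)sᵀAs. Suppose (λ_opt, s_opt) satisfies the TRS optimality conditions with ‖s_opt‖ = Δ and A + λ_opt·I positive definite, and set κ = (α₁ + λ_opt)/(α_n + λ_opt). Let k ≥ 0 and let s_k be a global minimizer of q over {s ∈ K_k(g,A) : ‖s‖ ≤ Δ} with ‖s_k‖ = Δ. Then 0 ≤ q(s_k) − q(s_opt) ≤ 8·(α₁ + λ_opt)·Δ²·((√κ − 1)/(√κ + 1))^{2(k+1)}. -/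

import Mathlib

open Matrix Polynomial

noncomputable section

/-- Euclidean 2-norm of a finitely indexed real vector. -/
def eucNorm {ι : Type*} [Fintype ι] (v : ι → ℝ) : ℝ := ‖(WithLp.equiv 2 (ι → ℝ)).symm v‖

/-- The Krylov subspace `K_k(g,A) = span{g, Ag, …, A^k g}`. -/
def krylov {n : ℕ} (A : Matrix (Fin n) (Fin n) ℝ) (g : Fin n → ℝ) (k : ℕ) :
    Submodule ℝ (Fin n → ℝ) :=
  Submodule.span ℝ {v | ∃ i : ℕ, i ≤ k ∧ v = (A ^ i).mulVec g}

lemma T_eval_half (σ : ℝ) (hσ : σ ≠ 0) (m : ℕ) :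
    (Polynomial.Chebyshev.T ℝ m).eval ((σ + σ⁻¹) / 2) = (σ ^ m + σ⁻¹ ^ m) / 2 := by
  induction m using Nat.twoStepInduction with
  | zero => simp [Polynomial.Chebyshev.T_zero]
  | one => simp [Polynomial.Chebyshev.T_one]
  | more m ih1 ih2 =>
    have h2 : (((m + 2 : ℕ)) : ℤ) = (m : ℤ) + 2 := by push_cast; ring
    have h1 : (((m + 1 : ℕ)) : ℤ) = (m : ℤ) + 1 := by push_cast; ring
    rw [h2, Polynomial.Chebyshev.T_add_two]
    simp only [Polynomial.eval_sub, Polynomial.eval_mul, Polynomial.eval_ofNat, Polynomial.eval_X]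
    rw [← h1, ih2, ih1]
    field_simp
    ring_nf
    field_simp
    ring

lemma T_abs_le (m : ℕ) {x : ℝ} (hx1 : -1 ≤ x) (hx2 : x ≤ 1) :
    |(Polynomial.Chebyshev.T ℝ m).eval x| ≤ 1 := by
  have h : x = Real.cos (Real.arccos x) := (Real.cos_arccos hx1 hx2).symm
  rw [h, Polynomial.Chebyshev.T_real_cos]
  exact Real.abs_cos_le_one _

lemma natDegree_T_le (m : ℕ) : (Polynomial.Chebyshev.T ℝ m).natDegree ≤ m := by
  induction m using Nat.twoStepInduction with
  | zero => simp [Polynomial.Chebyshev.T_zero]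
  | one => simp [Polynomial.Chebyshev.T_one]
  | more m ih1 ih2 =>
    have h2 : (((m + 2 : ℕ)) : ℤ) = (m : ℤ) + 2 := by push_cast; ring
    have h1 : ((m : ℤ) + 1) = ((m + 1 : ℕ) : ℤ) := by push_cast; ring
    rw [h2, Polynomial.Chebyshev.T_add_two, h1]
    refine le_trans (Polynomial.natDegree_sub_le _ _) (max_le ?_ (le_trans ih1 (by omega)))
    refine le_trans Polynomial.natDegree_mul_le ?_
    have ha : ((2 : ℝ[X]) * Polynomial.X).natDegree ≤ 1 :=
      le_trans Polynomial.natDegree_mul_le (by simp)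
    exact le_trans (add_le_add ha ih2) (by omega)

lemma exists_cheb_poly (b a : ℝ) (hb : 0 < b) (hba : b ≤ a) (k : ℕ) :
    ∃ p : ℝ[X], p.natDegree ≤ k ∧ ∀ x, b ≤ x → x ≤ a →
      |1 - x * p.eval x| ≤
        2 * ((Real.sqrt a - Real.sqrt b) / (Real.sqrt a + Real.sqrt b)) ^ (k + 1) := by
  rcases eq_or_lt_of_le hba with rfl | hlt
  · refine ⟨Polynomial.C b⁻¹, by simp, ?_⟩
    intro x hx1 hx2
    have hx : x = b := le_antisymm hx2 hx1
    rw [hx]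
    simp [mul_inv_cancel₀ hb.ne', sub_self, zero_pow (Nat.succ_ne_zero k)]
  · have ha : 0 < a := lt_trans hb hlt
    set sa := Real.sqrt a with hsa
    set sb := Real.sqrt b with hsb
    have hsb0 : 0 < sb := Real.sqrt_pos.2 hb
    have hsasb : sb < sa := Real.sqrt_lt_sqrt hb.le hlt
    have ha2 : sa ^ 2 = a := Real.sq_sqrt ha.le
    have hb2 : sb ^ 2 = b := Real.sq_sqrt hb.le
    have hden : sa - sb ≠ 0 := sub_ne_zero.2 hsasb.ne'
    have hden2 : sa + sb ≠ 0 := by positivity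
    have hab : a - b ≠ 0 := sub_ne_zero.2 hlt.ne'
    set ρ : ℝ := (sa - sb) / (sa + sb) with hρ
    have hρ0 : 0 < ρ := div_pos (by linarith) (by positivity)
    set σ : ℝ := (sa + sb) / (sa - sb) with hσ
    have hσ0 : 0 < σ := div_pos (by positivity) (by linarith)
    have hσinv : σ⁻¹ = ρ := by rw [hσ, hρ]; rw [inv_div]
    have hz : (a + b) / (a - b) = (σ + σ⁻¹) / 2 := by
      have h3 : sa ^ 2 - sb ^ 2 ≠ 0 := by
        intro h; apply hden; nlinarith [sq_nonneg (sa + sb)]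
      rw [hσinv, hσ, hρ, ← ha2, ← hb2]; field_simp; ring
    set τ : ℝ := (Polynomial.Chebyshev.T ℝ (k + 1)).eval ((a + b) / (a - b)) with hτ
    have hcast : ((k : ℤ) + 1) = ((k + 1 : ℕ) : ℤ) := by push_cast; ring
    have hτval : τ = (σ ^ (k + 1) + ρ ^ (k + 1)) / 2 := by
      rw [hτ, hz, hcast, T_eval_half σ hσ0.ne', hσinv]
    have hτpos : 0 < τ := by rw [hτval]; positivity
    have hτge : (2 * ρ ^ (k + 1))⁻¹ ≤ τ := by
      have hσρ : σ = ρ⁻¹ := by rw [← hσinv, inv_inv]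
      have h1 : (0:ℝ) < ρ ^ (k+1) := by positivity
      rw [hτval, hσρ, inv_pow, mul_inv, ← inv_pow]
      linarith [h1.le]
    set lin : ℝ[X] := Polynomial.C ((a + b) / (a - b)) - Polynomial.C (2 / (a - b)) * Polynomial.X with hlin
    set r : ℝ[X] := Polynomial.C τ⁻¹ * ((Polynomial.Chebyshev.T ℝ (k + 1)).comp lin) with hr
    have hreval : ∀ x : ℝ, r.eval x =
        τ⁻¹ * (Polynomial.Chebyshev.T ℝ (k + 1)).eval ((a + b - 2 * x) / (a - b)) := by
      intro x
      rw [hr]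
      simp only [Polynomial.eval_mul, Polynomial.eval_C, Polynomial.eval_comp, hlin,
        Polynomial.eval_sub, Polynomial.eval_mul, Polynomial.eval_C, Polynomial.eval_X]
      ring_nf
    have hr0 : r.eval 0 = 1 := by
      rw [hreval 0]
      simp only [mul_zero, sub_zero]
      rw [← hτ]
      exact inv_mul_cancel₀ hτpos.ne'
    set w : ℝ[X] := 1 - r with hw
    refine ⟨w.divX, ?_, ?_⟩
    · have hrdeg : r.natDegree ≤ k + 1 := by
        refine le_trans Polynomial.natDegree_mul_le ?_
        rw [Polynomial.natDegree_C, zero_add]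
        refine le_trans Polynomial.natDegree_comp_le ?_
        have hlindeg : lin.natDegree ≤ 1 := by
          rw [hlin]
          refine le_trans (Polynomial.natDegree_sub_le _ _) (max_le (by simp) ?_)
          exact le_trans Polynomial.natDegree_mul_le (by simp)
        calc (Polynomial.Chebyshev.T ℝ (k+1)).natDegree * lin.natDegree
            ≤ (k+1) * 1 := Nat.mul_le_mul (by rw [hcast]; exact natDegree_T_le (k+1)) hlindeg
          _ = k + 1 := by ring
      have hwdeg : w.natDegree ≤ k + 1 := by
        rw [hw]
        exact le_trans (Polynomial.natDegree_sub_le _ _) (max_le (by simp) hrdeg)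
      rw [Polynomial.natDegree_divX_eq_natDegree_tsub_one]
      omega
    · intro x hx1 hx2
      have hwx : ∀ y : ℝ, y * w.divX.eval y = w.eval y := by
        intro y
        have hc0 : w.coeff 0 = 0 := by
          rw [Polynomial.coeff_zero_eq_eval_zero, hw, Polynomial.eval_sub, Polynomial.eval_one,
            hr0, sub_self]
        have := Polynomial.X_mul_divX_add w
        rw [hc0, map_zero, add_zero] at this
        conv_rhs => rw [← this]
        simp [mul_comm]
      have hval : 1 - x * w.divX.eval x = r.eval x := by
        rw [hwx x, hw]
        simp
      rw [hval, hreval x]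
      have harg1 : -1 ≤ (a + b - 2 * x) / (a - b) := by
        rw [le_div_iff₀ (by linarith : (0:ℝ) < a - b)]
        linarith
      have harg2 : (a + b - 2 * x) / (a - b) ≤ 1 := by
        rw [div_le_one (by linarith : (0:ℝ) < a - b)]
        linarith
      have hT : |(Polynomial.Chebyshev.T ℝ ((k:ℤ) + 1)).eval ((a + b - 2 * x) / (a - b))| ≤ 1 := by
        rw [hcast]; exact T_abs_le (k + 1) harg1 harg2
      rw [abs_mul, abs_of_pos (inv_pos.2 hτpos)]
      calc τ⁻¹ * |(Polynomial.Chebyshev.T ℝ (k+1)).eval ((a + b - 2*x)/(a-b))|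
          ≤ τ⁻¹ * 1 := by
            exact mul_le_mul_of_nonneg_left hT (le_of_lt (inv_pos.2 hτpos))
        _ = τ⁻¹ := mul_one _
        _ ≤ 2 * ρ ^ (k+1) := by
            rw [← inv_inv (2 * ρ ^ (k+1))]
            exact inv_anti₀ (by positivity) hτge

lemma sum_mulVec' {n : ℕ} {ι : Type*} (s : Finset ι) (M : ι → Matrix (Fin n) (Fin n) ℝ)
    (v : Fin n → ℝ) : (∑ i ∈ s, M i) *ᵥ v = ∑ i ∈ s, M i *ᵥ v := by
  ext j
  simp only [Matrix.mulVec, dotProduct, Finset.sum_apply, Matrix.sum_apply,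
    Finset.sum_mul]
  rw [Finset.sum_comm]

lemma aeval_mulVec_mem_krylov {n : ℕ} (A : Matrix (Fin n) (Fin n) ℝ) (g : Fin n → ℝ) (k : ℕ)
    (Q : ℝ[X]) (hQ : Q.natDegree ≤ k) : (Polynomial.aeval A Q) *ᵥ g ∈ krylov A g k := by
  rw [Polynomial.aeval_eq_sum_range' (Nat.lt_succ_of_le hQ), sum_mulVec']
  refine Submodule.sum_mem _ fun i hi => ?_
  rw [Matrix.smul_mulVec]
  exact Submodule.smul_mem _ _
    (Submodule.subset_span ⟨i, Nat.lt_succ_iff.mp (Finset.mem_range.mp hi), rfl⟩)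

lemma dot_eq_inner {n : ℕ} (x y : Fin n → ℝ) :
    (inner ℝ ((WithLp.equiv 2 (Fin n → ℝ)).symm x) ((WithLp.equiv 2 (Fin n → ℝ)).symm y) : ℝ)
      = x ⬝ᵥ y := by
  simp [PiLp.inner_apply, dotProduct, RCLike.inner_apply, mul_comm]

lemma eucNorm_sq {n : ℕ} (v : Fin n → ℝ) : eucNorm v ^ 2 = v ⬝ᵥ v := by
  rw [eucNorm, ← real_inner_self_eq_norm_sq, dot_eq_inner]

lemma eucNorm_nonneg' {n : ℕ} (v : Fin n → ℝ) : 0 ≤ eucNorm v := norm_nonneg _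

lemma eucNorm_sub_le {n : ℕ} (x y z : Fin n → ℝ) :
    eucNorm (x - y) ≤ eucNorm (x - z) + eucNorm (z - y) := by
  simp only [eucNorm, WithLp.equiv_symm_apply, WithLp.toLp_sub]
  exact norm_sub_le_norm_sub_add_norm_sub _ _ _

lemma eucNorm_smul {n : ℕ} (t : ℝ) (v : Fin n → ℝ) : eucNorm (t • v) = |t| * eucNorm v := by
  simp only [eucNorm, WithLp.equiv_symm_apply, WithLp.toLp_smul, norm_smul, Real.norm_eq_abs]

lemma abs_enorm_sub_enorm_le {n : ℕ} (x y : Fin n → ℝ) :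
    |eucNorm x - eucNorm y| ≤ eucNorm (x - y) := by
  simp only [eucNorm, WithLp.equiv_symm_apply, WithLp.toLp_sub]
  exact abs_norm_sub_norm_le _ _

lemma eucNorm_eq_zero {n : ℕ} {v : Fin n → ℝ} : eucNorm v = 0 ↔ v = 0 := by
  rw [eucNorm, norm_eq_zero]
  constructor
  · intro h
    have := congrArg (WithLp.equiv 2 (Fin n → ℝ)) h
    simpa using this
  · rintro rfl; simp

lemma eucNorm_sub_le' {n : ℕ} (x y : Fin n → ℝ) : eucNorm (x - y) ≤ eucNorm x + eucNorm y := by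
  simp only [eucNorm, WithLp.equiv_symm_apply, WithLp.toLp_sub]
  exact norm_sub_le _ _

lemma eucNorm_sub_rev {n : ℕ} (x y : Fin n → ℝ) : eucNorm (x - y) = eucNorm (y - x) := by
  simp only [eucNorm, WithLp.equiv_symm_apply, WithLp.toLp_sub]
  exact norm_sub_rev _ _

/-- A-priori bound for the objective error of the GLTR method: under the TRS optimality
conditions with `‖s_opt‖ = Δ`, `A + λ_opt I ≻ 0`, `κ = (α₁ + λ_opt)/(α_n + λ_opt)`, and `s_k`
a minimizer of `q` over `{s ∈ K_k(g,A) : ‖s‖ ≤ Δ}` with `‖s_k‖ = Δ`,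
`0 ≤ q(s_k) − q(s_opt) ≤ 8 (α₁ + λ_opt) Δ² ((√κ − 1)/(√κ + 1))^{2(k+1)}`. -/
theorem stmt_14 {n : ℕ} (A : Matrix (Fin n) (Fin n) ℝ) (hA : A.IsSymm)
    (α₁ αn : ℝ)
    (hα₁ : (∃ v : Fin n → ℝ, v ≠ 0 ∧ A.mulVec v = α₁ • v) ∧
      ∀ (μ : ℝ) (v : Fin n → ℝ), v ≠ 0 → A.mulVec v = μ • v → μ ≤ α₁)
    (hαn : (∃ v : Fin n → ℝ, v ≠ 0 ∧ A.mulVec v = αn • v) ∧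
      ∀ (μ : ℝ) (v : Fin n → ℝ), v ≠ 0 → A.mulVec v = μ • v → αn ≤ μ)
    (g : Fin n → ℝ) (hg : g ≠ 0) (Δ : ℝ) (hΔ : 0 < Δ)
    (q : (Fin n → ℝ) → ℝ)
    (hq : ∀ s, q s = g ⬝ᵥ s + (1 / 2) * (s ⬝ᵥ A.mulVec s))
    (lamopt : ℝ) (sopt : Fin n → ℝ)
    (h1 : eucNorm sopt = Δ) (h2 : 0 ≤ lamopt)
    (h3 : (A + lamopt • (1 : Matrix (Fin n) (Fin n) ℝ)).mulVec sopt = -g)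
    (h4 : lamopt * (Δ - eucNorm sopt) = 0)
    (h5 : (A + lamopt • (1 : Matrix (Fin n) (Fin n) ℝ)).PosDef)
    (κ : ℝ) (hκ : κ = (α₁ + lamopt) / (αn + lamopt))
    (k : ℕ) (sk : Fin n → ℝ)
    (hskmem : sk ∈ krylov A g k) (hsknorm : eucNorm sk = Δ)
    (hskmin : ∀ s ∈ krylov A g k, eucNorm s ≤ Δ → q sk ≤ q s) :
    0 ≤ q sk - q sopt ∧
      q sk - q sopt ≤
        8 * (α₁ + lamopt) * Δ ^ 2 *
          ((Real.sqrt κ - 1) / (Real.sqrt κ + 1)) ^ (2 * (k + 1)) := by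
  classical
  have hH : A.IsHermitian := by
    rw [Matrix.IsHermitian, Matrix.conjTranspose_eq_transpose_of_trivial]
    exact hA
  set U : Fin n → (Fin n → ℝ) := fun i => ⇑(hH.eigenvectorBasis i) with hU
  set μ : Fin n → ℝ := hH.eigenvalues with hμ
  have heig : ∀ i, A *ᵥ U i = μ i • U i := fun i => hH.mulVec_eigenvectorBasis i
  have hUnz : ∀ i, U i ≠ 0 := by
    intro i h
    exact hH.eigenvectorBasis.orthonormal.ne_zero i (by simpa [hU] using congrArg (WithLp.toLp 2) h)
  set c : (Fin n → ℝ) → Fin n → ℝ := fun v i => U i ⬝ᵥ v with hcdef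
  -- Parseval
  have hpars : ∀ x y : Fin n → ℝ, x ⬝ᵥ y = ∑ i, c x i * c y i := by
    intro x y
    have h := hH.eigenvectorBasis.sum_inner_mul_inner
      ((WithLp.equiv 2 (Fin n → ℝ)).symm x) ((WithLp.equiv 2 (Fin n → ℝ)).symm y)
    rw [dot_eq_inner] at h
    rw [← h]
    refine Finset.sum_congr rfl fun i _ => ?_
    have h1 : (inner ℝ ((WithLp.equiv 2 (Fin n → ℝ)).symm x) (hH.eigenvectorBasis i) : ℝ)
        = c x i := by
      rw [real_inner_comm]
      exact dot_eq_inner (U i) x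
    have h2 : (inner ℝ (hH.eigenvectorBasis i) ((WithLp.equiv 2 (Fin n → ℝ)).symm y) : ℝ)
        = c y i := dot_eq_inner (U i) y
    rw [h1, h2]
  -- basic linearity of coordinates
  have hc_sub : ∀ (x y : Fin n → ℝ) i, c (x - y) i = c x i - c y i := by
    intro x y i; simp [hcdef, dotProduct_sub]
  have hc_smul : ∀ (t : ℝ) (x : Fin n → ℝ) i, c (t • x) i = t * c x i := by
    intro t x i; simp [hcdef, dotProduct_smul]
  have hc_mulVec : ∀ (v : Fin n → ℝ) i, c (A *ᵥ v) i = μ i * c v i := by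
    intro v i
    show U i ⬝ᵥ (A *ᵥ v) = μ i * (U i ⬝ᵥ v)
    rw [dotProduct_mulVec, ← Matrix.mulVec_transpose, hA, heig i,
      smul_dotProduct]
    simp
  have hc_pow : ∀ (m : ℕ) (v : Fin n → ℝ) i, c ((A ^ m) *ᵥ v) i = μ i ^ m * c v i := by
    intro m
    induction m with
    | zero => intro v i; simp [Matrix.one_mulVec]
    | succ m ih =>
      intro v i
      rw [pow_succ', ← Matrix.mulVec_mulVec, hc_mulVec, ih, pow_succ']
      ring
  have hc_sum : ∀ {ι : Type} (s : Finset ι) (f : ι → Fin n → ℝ) i,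
      c (∑ j ∈ s, f j) i = ∑ j ∈ s, c (f j) i := by
    intro ι s f i
    show U i ⬝ᵥ _ = _
    simp only [dotProduct, Finset.sum_apply, Finset.mul_sum]
    rw [Finset.sum_comm]
    rfl
  have hc_aeval : ∀ (Q : ℝ[X]) (v : Fin n → ℝ) i,
      c ((Polynomial.aeval A Q) *ᵥ v) i = Q.eval (μ i) * c v i := by
    intro Q v i
    rw [Polynomial.aeval_eq_sum_range' (Nat.lt_succ_self Q.natDegree), sum_mulVec', hc_sum,
      Polynomial.eval_eq_sum_range' (Nat.lt_succ_self Q.natDegree), Finset.sum_mul]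
    refine Finset.sum_congr rfl fun j _ => ?_
    rw [Matrix.smul_mulVec, hc_smul, hc_pow]
    simp [mul_assoc]
  -- eigenvalue bounds
  set a : ℝ := α₁ + lamopt with hadef
  set b : ℝ := αn + lamopt with hbdef
  set d : Fin n → ℝ := fun i => μ i + lamopt with hddef
  have hd_ub : ∀ i, d i ≤ a := by
    intro i
    have := hα₁.2 (μ i) (U i) (hUnz i) (heig i)
    simp only [hddef, hadef]
    linarith
  have hd_lb : ∀ i, b ≤ d i := by
    intro i
    have := hαn.2 (μ i) (U i) (hUnz i) (heig i)
    simp only [hddef, hbdef]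
    linarith
  have hb_pos : 0 < b := by
    obtain ⟨v, hvnz, hveig⟩ := hαn.1
    have hpd := h5.dotProduct_mulVec_pos hvnz
    have hBv : (A + lamopt • (1 : Matrix (Fin n) (Fin n) ℝ)) *ᵥ v = b • v := by
      rw [Matrix.add_mulVec, Matrix.smul_mulVec, Matrix.one_mulVec, hveig, hbdef]
      ext j; simp [Pi.smul_apply]; ring
    rw [hBv] at hpd
    have hsv : star v = v := by ext j; simp
    rw [hsv, dotProduct_smul] at hpd
    have hvv : 0 < v ⬝ᵥ v := by
      have hnn : 0 ≤ v ⬝ᵥ v := by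
        simp only [dotProduct]
        exact Finset.sum_nonneg fun j _ => mul_self_nonneg _
      rcases lt_or_eq_of_le hnn with h | h
      · exact h
      · exact absurd (dotProduct_self_eq_zero.mp h.symm) hvnz
    have hsm : b • (v ⬝ᵥ v) = b * (v ⬝ᵥ v) := rfl
    rw [hsm] at hpd
    nlinarith [hpd, hvv]
  have ha_pos : 0 < a := lt_of_lt_of_le hb_pos (le_trans (le_refl b) (by
    obtain ⟨v, hvnz, hveig⟩ := hα₁.1
    have := hαn.2 α₁ v hvnz hveig
    simp only [hadef, hbdef]; linarith))
  -- coordinates of g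
  have hg' : ∀ i, c g i = -(d i * c sopt i) := by
    intro i
    have hcongr := congrArg (fun v => c v i) h3
    rw [Matrix.add_mulVec, Matrix.smul_mulVec, Matrix.one_mulVec] at hcongr
    have hL : c (A *ᵥ sopt + lamopt • sopt) i = μ i * c sopt i + lamopt * c sopt i := by
      have hm := hc_mulVec sopt i
      simp only [hcdef, dotProduct_add, dotProduct_smul, smul_eq_mul] at hm ⊢
      linarith [hm]
    have hR : c (-g) i = -(c g i) := by
      simp [hcdef, dotProduct_neg]
    rw [hL, hR] at hcongr
    simp only [hddef]
    linarith
  have hΔ2 : Δ ^ 2 = ∑ i, c sopt i ^ 2 := by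
    rw [← h1, eucNorm_sq, hpars]
    exact Finset.sum_congr rfl fun i _ => (sq (c sopt i)).symm ▸ (by ring)
  have henorm2 : ∀ s : Fin n → ℝ, eucNorm s ^ 2 = ∑ i, c s i ^ 2 := by
    intro s
    rw [eucNorm_sq, hpars]
    exact Finset.sum_congr rfl fun i _ => by ring
  -- master identity
  have key : ∀ s : Fin n → ℝ,
      q s - q sopt = (1 / 2) * (∑ i, d i * (c s i - c sopt i) ^ 2)
        + lamopt / 2 * (Δ ^ 2 - eucNorm s ^ 2) := by
    intro s
    have hg2 : ∀ i, c g i = -((μ i + lamopt) * c sopt i) := by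
      intro i
      have := hg' i
      simp only [hddef] at this
      exact this
    rw [hq s, hq sopt, hpars g s, hpars g sopt, hpars s (A *ᵥ s), hpars sopt (A *ᵥ sopt),
      hΔ2, henorm2 s]
    simp only [hc_mulVec, mul_sub, Finset.mul_sum, ← Finset.sum_sub_distrib,
      ← Finset.sum_add_distrib]
    refine Finset.sum_congr rfl fun i _ => ?_
    simp only [hg2, hddef]
    ring
  -- lower bound
  have hsum_nonneg : ∀ s : Fin n → ℝ, 0 ≤ ∑ i, d i * (c s i - c sopt i) ^ 2 := fun s =>
    Finset.sum_nonneg fun i _ => mul_nonneg (le_trans hb_pos.le (hd_lb i)) (sq_nonneg _)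
  have hlow : 0 ≤ q sk - q sopt := by
    rw [key sk, hsknorm]
    have h' := hsum_nonneg sk
    linarith only [h']
  have hba : b ≤ a := by
    obtain ⟨v, hvnz, hveig⟩ := hα₁.1
    have := hαn.2 α₁ v hvnz hveig
    simp only [hadef, hbdef]
    linarith
  -- Chebyshev candidate polynomial
  obtain ⟨p, hpdeg, hpbound⟩ := exists_cheb_poly b a hb_pos hba k
  set ρ : ℝ := (Real.sqrt a - Real.sqrt b) / (Real.sqrt a + Real.sqrt b) with hρdef
  have hsb : 0 < Real.sqrt b := Real.sqrt_pos.2 hb_pos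
  have hsa : 0 < Real.sqrt a := Real.sqrt_pos.2 ha_pos
  have hρ0 : 0 ≤ ρ := div_nonneg (sub_nonneg.2 (Real.sqrt_le_sqrt hba)) (by positivity)
  set M : ℝ := 2 * ρ ^ (k + 1) with hMdef
  have hM0 : 0 ≤ M := by positivity
  set Q : ℝ[X] := -(p.comp (Polynomial.X + Polynomial.C lamopt)) with hQdef
  have hQdeg : Q.natDegree ≤ k := by
    rw [hQdef, Polynomial.natDegree_neg]
    refine le_trans Polynomial.natDegree_comp_le ?_
    rw [Polynomial.natDegree_X_add_C]
    simpa using hpdeg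
  set st : Fin n → ℝ := (Polynomial.aeval A Q) *ᵥ g with hstdef
  have hstmem : st ∈ krylov A g k := aeval_mulVec_mem_krylov A g k Q hQdeg
  have hst_coord : ∀ i, c st i - c sopt i = -(1 - d i * p.eval (d i)) * c sopt i := by
    intro i
    have h1' : c st i = Q.eval (μ i) * c g i := hc_aeval Q g i
    have hQe : Q.eval (μ i) = -(p.eval (d i)) := by
      rw [hQdef]
      simp only [Polynomial.eval_neg, Polynomial.eval_comp, Polynomial.eval_add,
        Polynomial.eval_X, Polynomial.eval_C, hddef]
    rw [h1', hQe, hg' i]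
    ring
  have hst_dist : eucNorm (st - sopt) ≤ M * Δ := by
    have hsq : eucNorm (st - sopt) ^ 2 ≤ (M * Δ) ^ 2 := by
      rw [henorm2 (st - sopt)]
      have hpt : ∀ i, c (st - sopt) i ^ 2 ≤ M ^ 2 * c sopt i ^ 2 := by
        intro i
        rw [hc_sub, hst_coord i]
        have hb1 := hpbound (d i) (hd_lb i) (hd_ub i)
        have habs := abs_le.mp hb1
        have ht2 : (1 - d i * p.eval (d i)) ^ 2 ≤ M ^ 2 := sq_le_sq' habs.1 habs.2
        calc (-(1 - d i * p.eval (d i)) * c sopt i) ^ 2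
            = (1 - d i * p.eval (d i)) ^ 2 * c sopt i ^ 2 := by ring
          _ ≤ M ^ 2 * c sopt i ^ 2 := mul_le_mul_of_nonneg_right ht2 (sq_nonneg _)
      calc ∑ i, c (st - sopt) i ^ 2 ≤ ∑ i, M ^ 2 * c sopt i ^ 2 :=
            Finset.sum_le_sum fun i _ => hpt i
        _ = M ^ 2 * ∑ i, c sopt i ^ 2 := (Finset.mul_sum _ _ _).symm
        _ = (M * Δ) ^ 2 := by rw [← hΔ2]; ring
    nlinarith only [hsq, eucNorm_nonneg' (st - sopt), mul_nonneg hM0 hΔ.le]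
  -- generic sum bound
  have hsum_ub : ∀ s : Fin n → ℝ, ∑ i, d i * (c s i - c sopt i) ^ 2
      ≤ a * eucNorm (s - sopt) ^ 2 := by
    intro s
    calc ∑ i, d i * (c s i - c sopt i) ^ 2 ≤ ∑ i, a * (c s i - c sopt i) ^ 2 :=
          Finset.sum_le_sum fun i _ => mul_le_mul_of_nonneg_right (hd_ub i) (sq_nonneg _)
      _ = a * ∑ i, (c s i - c sopt i) ^ 2 := (Finset.mul_sum _ _ _).symm
      _ = a * eucNorm (s - sopt) ^ 2 := by
          rw [henorm2 (s - sopt)]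
          congr 1
          exact Finset.sum_congr rfl fun i _ => by rw [hc_sub]
  have hmain : q sk - q sopt ≤ 2 * a * M ^ 2 * Δ ^ 2 := by
    by_cases hst0 : st = 0
    · have hM1 : 1 ≤ M := by
        have hdd := hst_dist
        rw [hst0] at hdd
        have h0 : eucNorm ((0 : Fin n → ℝ) - sopt) = Δ := by
          rw [eucNorm_sub_rev, sub_zero, h1]
        rw [h0] at hdd
        nlinarith only [hdd, hΔ]
      rw [key sk, hsknorm]
      have hterm := hsum_ub sk
      have hskd : eucNorm (sk - sopt) ≤ 2 * Δ := by
        have h' := eucNorm_sub_le' sk sopt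
        rw [hsknorm, h1] at h'
        linarith only [h']
      have hskd2 : eucNorm (sk - sopt) ^ 2 ≤ (2 * Δ) ^ 2 :=
        pow_le_pow_left₀ (eucNorm_nonneg' _) hskd 2
      have hM2 : 1 ≤ M ^ 2 := by nlinarith only [hM1, hM0]
      have hstep : a * eucNorm (sk - sopt) ^ 2 ≤ a * (2 * Δ) ^ 2 :=
        mul_le_mul_of_nonneg_left hskd2 ha_pos.le
      have h2a : (0 : ℝ) ≤ 2 * a * Δ ^ 2 :=
        mul_nonneg (mul_nonneg (by norm_num) ha_pos.le) (sq_nonneg Δ)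
      have hfin : 2 * a * Δ ^ 2 ≤ 2 * a * M ^ 2 * Δ ^ 2 := by
        have := mul_le_mul_of_nonneg_left hM2 h2a
        nlinarith only [this]
      have hterm2 := hsum_ub sk
      calc (1 : ℝ) / 2 * (∑ i, d i * (c sk i - c sopt i) ^ 2) + lamopt / 2 * (Δ ^ 2 - Δ ^ 2)
          = (1 / 2) * (∑ i, d i * (c sk i - c sopt i) ^ 2) := by ring
        _ ≤ (1 / 2) * (a * (2 * Δ) ^ 2) :=
            mul_le_mul_of_nonneg_left (le_trans hterm2 hstep) (by norm_num)
        _ = 2 * a * Δ ^ 2 := by ring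
        _ ≤ 2 * a * M ^ 2 * Δ ^ 2 := hfin
    · have ht0 : 0 < eucNorm st :=
        lt_of_le_of_ne (eucNorm_nonneg' st) fun h => hst0 (eucNorm_eq_zero.mp h.symm)
      set θ : ℝ := Δ / eucNorm st with hθdef
      have hθpos : 0 < θ := div_pos hΔ ht0
      set s : Fin n → ℝ := θ • st with hsdef
      have hsmem : s ∈ krylov A g k := Submodule.smul_mem _ _ hstmem
      have hsnorm : eucNorm s = Δ := by
        rw [hsdef, eucNorm_smul, abs_of_pos hθpos, hθdef]
        field_simp
      have hqs := hskmin s hsmem (le_of_eq hsnorm)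
      have hd1 : eucNorm (s - st) = |Δ - eucNorm st| := by
        have hss : s - st = (θ - 1) • st := by rw [hsdef, sub_smul, one_smul]
        have hθ1 : θ - 1 = (Δ - eucNorm st) / eucNorm st := by
          rw [hθdef]; field_simp
        rw [hss, eucNorm_smul, hθ1, abs_div, abs_of_pos ht0]
        field_simp
      have hd2 : |Δ - eucNorm st| ≤ eucNorm (st - sopt) := by
        have h' := abs_enorm_sub_enorm_le sopt st
        rw [h1, eucNorm_sub_rev sopt st] at h'
        exact h'
      have hdist : eucNorm (s - sopt) ≤ 2 * (M * Δ) := by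
        calc eucNorm (s - sopt) ≤ eucNorm (s - st) + eucNorm (st - sopt) := eucNorm_sub_le s sopt st
          _ ≤ eucNorm (st - sopt) + eucNorm (st - sopt) := by
              rw [hd1]; linarith only [hd2]
          _ ≤ 2 * (M * Δ) := by linarith only [hst_dist]
      have hdist2 : eucNorm (s - sopt) ^ 2 ≤ (2 * (M * Δ)) ^ 2 :=
        pow_le_pow_left₀ (eucNorm_nonneg' _) hdist 2
      have hkey := key s
      rw [hsnorm] at hkey
      have hterm := hsum_ub s
      have hstep : a * eucNorm (s - sopt) ^ 2 ≤ a * (2 * (M * Δ)) ^ 2 :=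
        mul_le_mul_of_nonneg_left hdist2 ha_pos.le
      have hqbound : q s - q sopt ≤ 2 * a * M ^ 2 * Δ ^ 2 := by
        rw [hkey]
        calc (1 : ℝ) / 2 * (∑ i, d i * (c s i - c sopt i) ^ 2) + lamopt / 2 * (Δ ^ 2 - Δ ^ 2)
            = (1 / 2) * (∑ i, d i * (c s i - c sopt i) ^ 2) := by ring
          _ ≤ (1 / 2) * (a * (2 * (M * Δ)) ^ 2) :=
              mul_le_mul_of_nonneg_left (le_trans hterm hstep) (by norm_num)
          _ = 2 * a * M ^ 2 * Δ ^ 2 := by ring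
      linarith only [hqs, hqbound]
  -- rewrite in terms of κ
  have hρκ : (Real.sqrt κ - 1) / (Real.sqrt κ + 1) = ρ := by
    rw [hκ, Real.sqrt_div ha_pos.le b]
    have h1' : Real.sqrt a / Real.sqrt b - 1 = (Real.sqrt a - Real.sqrt b) / Real.sqrt b := by
      field_simp
    have h2' : Real.sqrt a / Real.sqrt b + 1 = (Real.sqrt a + Real.sqrt b) / Real.sqrt b := by
      field_simp
    rw [h1', h2', hρdef]
    have hne : Real.sqrt a + Real.sqrt b ≠ 0 := by positivity
    field_simp
  constructor
  · exact hlow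
  · have hgoal : 8 * a * Δ ^ 2 * ((Real.sqrt κ - 1) / (Real.sqrt κ + 1)) ^ (2 * (k + 1))
        = 2 * a * M ^ 2 * Δ ^ 2 := by
      rw [hρκ, hMdef, mul_comm 2 (k + 1), pow_mul]
      ring
    rw [hgoal]
    exact hmain
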